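/- For any integer j ≥ -1, (v_{2j} w_{2j+1})^{d_{2j+3}} = v_{2j} v_{2j+1}; consequently, for any n ∈ ℕ, the product ∏_{j=-1}^{n-1} (v_{2j} w_{2j+1})^{d_{2j+3}} equals ∏_{j=-1}^{2n-1} v_j (concatenation in increasing order of index). -/

import Mathlib

/-- Letters: `a` is `false`, `b` is `true`. -/
abbrev Word := List Bool

/-- `wpow w k` is the `k`-fold concatenation `w^k`. -/
def wpow (w : Word) (k : ℕ) : Word := (List.replicate k w).flatten

/-!
Write `u⁻` for `u` without its last letter and `c_n` for the letter prepended in `w_n` and `v_n`.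
The last letter of `s_n` is `c_{n+1} = c_{n-1}`. Hence `w_n v_{n-1} = c_n (s_n^{d_{n+1}} s_{n-1})⁻ = c_n s_{n+1}⁻`, a conjugate of `s_{n+1}`, and
`v_n = c_n s_{n+1}^{d_{n+2}-1} s_n⁻ = (w_n v_{n-1})^{d_{n+2}-1} w_n`. Appending `v_{n-1}` on the left
turns the right-hand side into `(v_{n-1} w_n)^{d_{n+2}}`; at `n = 2j+1` this is the first claim, and
the product formula follows by grouping the `v_j` in consecutive pairs.
-/

lemma wpow_succ (u : Word) (k : ℕ) : wpow u (k + 1) = u ++ wpow u k := by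
  simp [wpow, List.replicate_succ]

lemma wpow_succ' (u : Word) (k : ℕ) : wpow u (k + 1) = wpow u k ++ u := by
  simp [wpow, List.replicate_succ']

lemma wpow_append_append (x y : Word) (e : ℕ) :
    wpow (x ++ y) e ++ x = x ++ wpow (y ++ x) e := by
  induction e with
  | zero => simp [wpow]
  | succ e ih => simp only [wpow_succ, List.append_assoc, ih]

lemma wpow_append_succ (x y : Word) (e : ℕ) :
    wpow (x ++ y) (e + 1) = x ++ (wpow (y ++ x) e ++ y) := by
  rw [wpow_succ', ← List.append_assoc, wpow_append_append, List.append_assoc]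

/-- With `s_n = x a` and `s_{n-1} = y b`, so that `c_n = b` and `c_{n-1} = a`, the two sides are
`v_n` and `(w_n v_{n-1})^e w_n`. -/
lemma singular_power_identity (a b : Bool) (x y : Word) (k e : ℕ) :
    [b] ++ (wpow (wpow (x ++ [a]) (k + 1) ++ (y ++ [b])) e ++ (x ++ [a])).dropLast =
      wpow ([b] ++ x ++ ([a] ++ (wpow (x ++ [a]) k ++ (y ++ [b])).dropLast)) e ++ ([b] ++ x) := by
  have hx : ∀ z : Word, (z ++ (x ++ [a])).dropLast = z ++ x := by
    intro z; rw [← List.append_assoc, List.dropLast_concat]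
  have hy : ∀ z : Word, (z ++ (y ++ [b])).dropLast = z ++ y := by
    intro z; rw [← List.append_assoc, List.dropLast_concat]
  have hW : [b] ++ x ++ ([a] ++ (wpow (x ++ [a]) k ++ y)) = [b] ++ (wpow (x ++ [a]) (k + 1) ++ y) := by
    simp [wpow_succ]
  rw [hx, hy, hW, ← List.append_assoc, ← List.append_assoc, ← wpow_append_append]
  simp

section StandardSequence

variable {d : ℤ → ℕ} {s : ℤ → Word}

lemma exists_eq_append_odd (hs1 : s (-1) = [true]) (hs0 : s 0 = [false])
    (hs : ∀ n : ℤ, 1 ≤ n → s n = wpow (s (n - 1)) (d n) ++ s (n - 2)) (m : ℤ) (hm : -1 ≤ m) :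
    ∃ x, s m = x ++ [decide (Odd m)] := by
  suffices h : (∃ x, s m = x ++ [decide (Odd m)]) ∧ ∃ x, s (m + 1) = x ++ [decide (Odd (m + 1))] from
    h.1
  induction m, hm using Int.leInduction with
  | base => exact ⟨⟨[], by simp [hs1]⟩, ⟨[], by simp [hs0]⟩⟩
  | succ m hm ih =>
    obtain ⟨⟨x, hx⟩, hnext⟩ := ih
    refine ⟨hnext, wpow (s (m + 1)) (d (m + 2)) ++ x, ?_⟩
    rw [show m + 1 + 1 = m + 2 by ring, hs (m + 2) (by omega), show m + 2 - 1 = m + 1 by ring,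
      show m + 2 - 2 = m by ring, hx]
    simp [odd_add_two]

variable {w v : ℤ → Word}

lemma adjoining_eq_wpow_append (hd : ∀ n : ℤ, 1 ≤ n → 1 ≤ d n)
    (hs1 : s (-1) = [true]) (hs0 : s 0 = [false])
    (hs : ∀ n : ℤ, 1 ≤ n → s n = wpow (s (n - 1)) (d n) ++ s (n - 2))
    (hw : ∀ n : ℤ, 0 ≤ n → w n = (if Odd n then [false] else [true]) ++ (s n).dropLast)
    (hwm1 : w (-1) = [false])
    (hv : ∀ n : ℤ, -1 ≤ n → v n = (if Odd n then [false] else [true]) ++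
      (wpow (s (n + 1)) (d (n + 2) - 1) ++ s n).dropLast)
    (hvm2 : v (-2) = []) (m : ℤ) (hm : -1 ≤ m) :
    v m = wpow (w m ++ v (m - 1)) (d (m + 2) - 1) ++ w m := by
  obtain rfl | hm := hm.eq_or_lt
  · rw [hv (-1) le_rfl, hwm1, show (-1 : ℤ) - 1 = -2 by norm_num, hvm2, List.append_nil]
    norm_num [hs0, hs1]
    simpa using (wpow_append_append [false] [] (d 1 - 1)).symm
  obtain ⟨x, hx⟩ := exists_eq_append_odd hs1 hs0 hs m (by omega)
  obtain ⟨y, hy⟩ := exists_eq_append_odd hs1 hs0 hs (m - 1) (by omega)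
  obtain ⟨k, hk⟩ : ∃ k, d (m + 1) = k + 1 := Nat.exists_eq_add_of_le' (hd (m + 1) (by omega))
  have hb : (if Odd m then ([false] : Word) else [true]) = [decide (Odd (m - 1))] := by
    rcases Int.even_or_odd m with h | h <;> simp [h, parity_simps]
  have ha : (if Odd (m - 1) then ([false] : Word) else [true]) = [decide (Odd m)] := by
    rcases Int.even_or_odd m with h | h <;> simp [h, parity_simps]
  have hsucc : s (m + 1) = wpow (s m) (d (m + 1)) ++ s (m - 1) := by
    rw [hs (m + 1) (by omega), show m + 1 - 1 = m by ring, show m + 1 - 2 = m - 1 by ring]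
  rw [hv m (by omega), hv (m - 1) (by omega), hw m (by omega), show m - 1 + 1 = m by ring,
    show m - 1 + 2 = m + 1 by ring, hsucc, hk, Nat.add_sub_cancel, ha, hb, hx, hy,
    List.dropLast_concat]
  exact singular_power_identity _ _ x y k _

lemma wpow_adjoining_append_singular (hd : ∀ n : ℤ, 1 ≤ n → 1 ≤ d n)
    (hs1 : s (-1) = [true]) (hs0 : s 0 = [false])
    (hs : ∀ n : ℤ, 1 ≤ n → s n = wpow (s (n - 1)) (d n) ++ s (n - 2))
    (hw : ∀ n : ℤ, 0 ≤ n → w n = (if Odd n then [false] else [true]) ++ (s n).dropLast)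
    (hwm1 : w (-1) = [false])
    (hv : ∀ n : ℤ, -1 ≤ n → v n = (if Odd n then [false] else [true]) ++
      (wpow (s (n + 1)) (d (n + 2) - 1) ++ s n).dropLast)
    (hvm2 : v (-2) = []) (j : ℤ) (hj : -1 ≤ j) :
    wpow (v (2 * j) ++ w (2 * j + 1)) (d (2 * j + 3)) = v (2 * j) ++ v (2 * j + 1) := by
  obtain ⟨e, he⟩ : ∃ e, d (2 * j + 3) = e + 1 := Nat.exists_eq_add_of_le' (hd _ (by omega))
  have key := adjoining_eq_wpow_append hd hs1 hs0 hs hw hwm1 hv hvm2 (2 * j + 1) (by omega)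
  rw [show 2 * j + 1 + 2 = 2 * j + 3 by ring, show 2 * j + 1 - 1 = 2 * j by ring, he,
    Nat.add_sub_cancel] at key
  rw [key, he, wpow_append_succ]

end StandardSequence

lemma flatten_map_range_pairs {α : Type*} (f : ℕ → List α) (n : ℕ) :
    ((List.range n).map fun i => f (2 * i) ++ f (2 * i + 1)).flatten =
      ((List.range (2 * n)).map f).flatten := by
  induction n with
  | zero => simp
  | succ n ih =>
    rw [List.range_succ, show 2 * (n + 1) = 2 * n + 1 + 1 by ring, List.range_succ,
      List.range_succ]
    simp [ih]

theorem adjoining_product_identity_general (d : ℤ → ℕ) (s : ℤ → Word)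
    (hd : ∀ n : ℤ, 1 ≤ n → 1 ≤ d n)
    (hs1 : s (-1) = [true]) (hs0 : s 0 = [false])
    (hs : ∀ n : ℤ, 1 ≤ n → s n = wpow (s (n - 1)) (d n) ++ s (n - 2))
    (w : ℤ → Word)
    (hw : ∀ n : ℤ, 0 ≤ n → w n = (if Odd n then [false] else [true]) ++ (s n).dropLast)
    (hwm1 : w (-1) = [false])
    (v : ℤ → Word)
    (hv : ∀ n : ℤ, -1 ≤ n → v n = (if Odd n then [false] else [true]) ++ (wpow (s (n + 1)) (d (n + 2) - 1) ++ s n).dropLast)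
    (hvm2 : v (-2) = []) :
    (∀ j : ℤ, -1 ≤ j →
      wpow (v (2 * j) ++ w (2 * j + 1)) (d (2 * j + 3)) = v (2 * j) ++ v (2 * j + 1)) ∧
    (∀ n : ℕ,
      ((List.range (n + 1)).map fun i =>
        wpow (v (2 * ((i : ℤ) - 1)) ++ w (2 * ((i : ℤ) - 1) + 1))
          (d (2 * ((i : ℤ) - 1) + 3))).flatten =
      ((List.range (2 * n + 1)).map fun i => v ((i : ℤ) - 1)).flatten) := by
  have pair := wpow_adjoining_append_singular hd hs1 hs0 hs hw hwm1 hv hvm2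
  refine ⟨pair, fun n => ?_⟩
  -- the casts `(i : ℤ)` make Lean lift `List.range _` to a list of integers; undo that
  simp only [bind_pure_comp, List.map_eq_map, List.map_map]
  let f : ℕ → Word := fun k => v ((k : ℤ) - 2)
  calc _ = ((List.range (n + 1)).map fun i => f (2 * i) ++ f (2 * i + 1)).flatten := by
        refine congrArg _ (List.map_congr_left fun i _ => ?_)
        rw [Function.comp_apply, pair _ (by omega)]
        push_cast [f]
        ring_nf
    _ = ((List.range (2 * n + 1 + 1)).map f).flatten := flatten_map_range_pairs f (n + 1)
    _ = _ := by
        rw [List.range_succ_eq_map, List.map_cons, List.flatten_cons, List.map_map]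
        refine congrArg₂ (· ++ ·) (by simpa [f] using hvm2)
          (congrArg _ (List.map_congr_left fun i _ => ?_))
        simp only [f, Function.comp_apply, Nat.cast_succ]
        ring_nf

/-- For any `j ≥ -1`, `(v₂ⱼ w₂ⱼ₊₁)^(d₂ⱼ₊₃) = v₂ⱼ v₂ⱼ₊₁`; consequently for any
`n ∈ ℕ`, `∏_{j=-1}^{n-1} (v₂ⱼ w₂ⱼ₊₁)^(d₂ⱼ₊₃) = ∏_{j=-1}^{2n-1} vⱼ`. -/
theorem adjoining_product_identity (d : ℤ → ℕ) (s : ℤ → Word)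
    (hd : ∀ n : ℤ, 1 ≤ n → 1 ≤ d n)
    (hs1 : s (-1) = [true]) (hs0 : s 0 = [false])
    (hs : ∀ n : ℤ, 1 ≤ n → s n = wpow (s (n - 1)) (d n) ++ s (n - 2))
    (w : ℤ → Word)
    (hw : ∀ n : ℤ, 0 ≤ n → w n = (if Odd n then [false] else [true]) ++ (s n).dropLast)
    (hwm1 : w (-1) = [false]) (hwm2 : w (-2) = [])
    (v : ℤ → Word)
    (hv : ∀ n : ℤ, -1 ≤ n → v n = (if Odd n then [false] else [true]) ++ (wpow (s (n + 1)) (d (n + 2) - 1) ++ s n).dropLast)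
    (hvm2 : v (-2) = []) :
    (∀ j : ℤ, -1 ≤ j →
      wpow (v (2 * j) ++ w (2 * j + 1)) (d (2 * j + 3)) = v (2 * j) ++ v (2 * j + 1)) ∧
    (∀ n : ℕ,
      ((List.range (n + 1)).map fun i =>
        wpow (v (2 * ((i : ℤ) - 1)) ++ w (2 * ((i : ℤ) - 1) + 1))
          (d (2 * ((i : ℤ) - 1) + 3))).flatten =
      ((List.range (2 * n + 1)).map fun i => v ((i : ℤ) - 1)).flatten) :=
  adjoining_product_identity_general d s hd hs1 hs0 hs w hw hwm1 v hv hvm2
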